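/- Let M_q(n) be the standard quantized matrix algebra over K with n ≥ 2 and q ≠ 0, and assume the ordered monomials {z^α : α ∈ ℕ^{I(n)}} form a K-basis of M_q(n). Then the lexicographic order ≺ satisfies condition (3) of the definition of a monomial ordering: for all α, β, γ, η ∈ ℕ^{I(n)}, if α ≺ β, then LE(z^γ z^α z^η) ≺ LE(z^γ z^β z^η). -/

import Mathlib

/-! Common setup: the standard quantized matrix algebra `M_q(n)` of
Faddeev–Reshetikhin–Takhtajan, defined as the quotient of the free
`K`-algebra on the `n²` generators `z_{ij}` by the two-sided ideal
generated by the relations R1–R4. -/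

/-- The generator `z_{ij}` of the free algebra on `Fin n × Fin n`. -/
noncomputable def freeGen (K : Type*) [Field K] (n : ℕ) (i j : Fin n) :
    FreeAlgebra K (Fin n × Fin n) :=
  FreeAlgebra.ι K (i, j)

/-- The defining relations R1–R4 of the standard quantized matrix algebra. -/
inductive QMRel (K : Type*) [Field K] (q : K) (n : ℕ) :
    FreeAlgebra K (Fin n × Fin n) → FreeAlgebra K (Fin n × Fin n) → Prop
  | r1 (i j k : Fin n) (h : j < k) :
      QMRel K q n (freeGen K n i j * freeGen K n i k)
        (q • (freeGen K n i k * freeGen K n i j))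
  | r2 (i j k : Fin n) (h : i < k) :
      QMRel K q n (freeGen K n i j * freeGen K n k j)
        (q • (freeGen K n k j * freeGen K n i j))
  | r3 (i j s t : Fin n) (h1 : i < s) (h2 : t < j) :
      QMRel K q n (freeGen K n i j * freeGen K n s t)
        (freeGen K n s t * freeGen K n i j)
  | r4 (i j s t : Fin n) (h1 : i < s) (h2 : j < t) :
      QMRel K q n (freeGen K n i j * freeGen K n s t)
        (freeGen K n s t * freeGen K n i j +
          (q - q⁻¹) • (freeGen K n i t * freeGen K n s j))

/-- The standard quantized matrix algebra `M_q(n)`: the quotient of the free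
algebra by the two-sided ideal generated by the relations R1–R4. -/
abbrev QuantumMatrix (K : Type*) [Field K] (q : K) (n : ℕ) :=
  RingQuot (QMRel K q n)

/-- The generator `z_{ij}` of `M_q(n)`. -/
noncomputable def Zgen (K : Type*) [Field K] (q : K) (n : ℕ) (i j : Fin n) :
    QuantumMatrix K q n :=
  RingQuot.mkAlgHom K (QMRel K q n) (freeGen K n i j)

/-- The order on the index set `I(n)`: `(k,l) < (i,j)` iff `k < i`, or
`k = i` and `l < j`. -/
def idxLt {n : ℕ} (p r : Fin n × Fin n) : Prop :=
  p.1 < r.1 ∨ (p.1 = r.1 ∧ p.2 < r.2)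

/-- The ordered monomial `z^α`: the product of the `z_{ij}^{α_{ij}}` taken
in decreasing order of the indices `(i,j)`, i.e.
`z_{nn}^{α_{nn}} z_{n,n-1}^{α_{n,n-1}} ⋯ z_{n1}^{α_{n1}} ⋯ z_{11}^{α_{11}}`. -/
noncomputable def zmon (K : Type*) [Field K] (q : K) {n : ℕ}
    (α : Fin n × Fin n → ℕ) : QuantumMatrix K q n :=
  ((List.finRange n).reverse.flatMap fun i =>
    (List.finRange n).reverse.map fun j => Zgen K q n i j ^ α (i, j)).prod

/-- The lexicographic order on exponent vectors: `α ≺ β` iff `α` is smaller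
than `β` at the largest index (w.r.t. the order on `I(n)`) at which they
differ. -/
def expLt {n : ℕ} (α β : Fin n × Fin n → ℕ) : Prop :=
  ∃ p : Fin n × Fin n, α p < β p ∧ ∀ r : Fin n × Fin n, idxLt p r → α r = β r

/-- The indicator exponent vector `ε_{ij}`. -/
def eps {n : ℕ} (i j : Fin n) : Fin n × Fin n → ℕ :=
  fun p => if p = (i, j) then 1 else 0

/-- `γ` is the leading exponent of `f` with respect to the order `lt`,
relative to the PBW basis `b` indexed by exponent vectors:
`γ` occurs with nonzero coefficient in the expansion of `f` and every other
exponent occurring in `f` is `lt`-smaller than `γ`. -/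
def IsLeadExpWrt {K : Type*} [Field K] {q : K} {n : ℕ}
    (lt : (Fin n × Fin n → ℕ) → (Fin n × Fin n → ℕ) → Prop)
    (b : Module.Basis (Fin n × Fin n → ℕ) K (QuantumMatrix K q n))
    (f : QuantumMatrix K q n) (γ : Fin n × Fin n → ℕ) : Prop :=
  b.repr f γ ≠ 0 ∧ ∀ δ, b.repr f δ ≠ 0 → δ = γ ∨ lt δ γ

/-- `γ` is the leading exponent of `f` w.r.t. the lexicographic order. -/
def IsLeadExp {K : Type*} [Field K] {q : K} {n : ℕ}
    (b : Module.Basis (Fin n × Fin n → ℕ) K (QuantumMatrix K q n))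
    (f : QuantumMatrix K q n) (γ : Fin n × Fin n → ℕ) : Prop :=
  IsLeadExpWrt expLt b f γ

/-!
Every word in the generators equals a nonzero multiple of the ordered monomial with the same
exponent vector plus a combination of `≺`-smaller ordered monomials. To see this, rewrite an
adjacent ascending pair of letters: R1–R3 only rescale, while R4 also adds a word whose exponent
vector is `≺`-smaller. Both new words are lexicographically larger as letter sequences, and there
are finitely many words of each length, so the rewriting terminates. Hence
`LE(z^γ z^α z^η) = γ + α + η`, and `≺` is compatible with addition.
-/

section ExponentOrder

variable {n : ℕ}

theorem idxLt_iff_toLex_lt {p r : Fin n × Fin n} : idxLt p r ↔ toLex p < toLex r :=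
  Prod.Lex.toLex_lt_toLex.symm

/-- `expLt` compares at the largest differing index, so it is `Pi.Lex` over the order dual. -/
def expKey (α : Fin n × Fin n → ℕ) : Lex ((Fin n ×ₗ Fin n)ᵒᵈ → ℕ) :=
  toLex fun p => α (ofLex (OrderDual.ofDual p))

theorem expLt_iff_expKey_lt {α β : Fin n × Fin n → ℕ} : expLt α β ↔ expKey α < expKey β := by
  simp only [expLt, idxLt_iff_toLex_lt]
  exact ⟨fun ⟨p, hp, h⟩ => ⟨OrderDual.toDual (toLex p), fun r hr => h _ hr, hp⟩,
    fun ⟨p, h, hp⟩ => ⟨ofLex (OrderDual.ofDual p), hp, fun r hr => h (.toDual (toLex r)) hr⟩⟩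

theorem expLt_irrefl (α : Fin n × Fin n → ℕ) : ¬ expLt α α := by
  rw [expLt_iff_expKey_lt]; exact lt_irrefl _

theorem expLt_trans {α β γ : Fin n × Fin n → ℕ} (h₁ : expLt α β) (h₂ : expLt β γ) : expLt α γ := by
  rw [expLt_iff_expKey_lt] at *; exact h₁.trans h₂

theorem expLt_add_add {α β : Fin n × Fin n → ℕ} (γ η : Fin n × Fin n → ℕ) (h : expLt α β) :
    expLt (γ + α + η) (γ + β + η) := by
  rw [expLt_iff_expKey_lt] at *
  change expKey γ + expKey α + expKey η < expKey γ + expKey β + expKey η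
  gcongr

end ExponentOrder

section LeadingTerm

variable {K : Type*} [Field K] {q : K} {n : ℕ}

variable (K q) in
noncomputable def lowSpan (θ : Fin n × Fin n → ℕ) : Submodule K (QuantumMatrix K q n) :=
  Submodule.span K (zmon K q '' {ε | expLt ε θ})

theorem lowSpan_mono {θ θ' : Fin n × Fin n → ℕ} (h : expLt θ θ') :
    lowSpan K q θ ≤ lowSpan K q θ' :=
  Submodule.span_mono <| Set.image_mono fun _ hε => expLt_trans hε h

variable (K q) in
def HasLeadTerm (θ : Fin n × Fin n → ℕ) (f : QuantumMatrix K q n) : Prop :=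
  ∃ c : K, c ≠ 0 ∧ f - c • zmon K q θ ∈ lowSpan K q θ

theorem hasLeadTerm_zmon (θ : Fin n × Fin n → ℕ) : HasLeadTerm K q θ (zmon K q θ) :=
  ⟨1, one_ne_zero, by simp⟩

namespace HasLeadTerm

variable {θ : Fin n × Fin n → ℕ} {f : QuantumMatrix K q n}

theorem smul (hf : HasLeadTerm K q θ f) {s : K} (hs : s ≠ 0) : HasLeadTerm K q θ (s • f) := by
  obtain ⟨c, hc, hmem⟩ := hf
  refine ⟨s * c, mul_ne_zero hs hc, ?_⟩
  simpa only [smul_sub, mul_smul] using Submodule.smul_mem _ s hmem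

theorem add_mem (hf : HasLeadTerm K q θ f) {g : QuantumMatrix K q n} (hg : g ∈ lowSpan K q θ) :
    HasLeadTerm K q θ (f + g) := by
  obtain ⟨c, hc, hmem⟩ := hf
  refine ⟨c, hc, ?_⟩
  rw [add_sub_right_comm]
  exact Submodule.add_mem _ hmem hg

theorem mem_lowSpan (hf : HasLeadTerm K q θ f) {θ' : Fin n × Fin n → ℕ} (h : expLt θ θ') :
    f ∈ lowSpan K q θ' := by
  obtain ⟨c, -, hmem⟩ := hf
  rw [← sub_add_cancel f (c • zmon K q θ)]
  exact Submodule.add_mem _ (lowSpan_mono h hmem)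
    (Submodule.smul_mem _ c (Submodule.subset_span ⟨θ, h, rfl⟩))

theorem isLeadExp (hf : HasLeadTerm K q θ f)
    (b : Module.Basis (Fin n × Fin n → ℕ) K (QuantumMatrix K q n)) (hb : ∀ α, b α = zmon K q α) :
    IsLeadExp b f θ := by
  obtain ⟨c, hc, hmem⟩ := hf
  have hb' : zmon K q = b := funext fun α => (hb α).symm
  rw [lowSpan, hb', b.mem_span_image] at hmem
  have hrepr : b.repr f = b.repr (f - c • b θ) + Finsupp.single θ c := by
    rw [map_sub, map_smul, b.repr_self, Finsupp.smul_single_one, sub_add_cancel]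
  have hlow : ∀ δ, b.repr (f - c • b θ) δ ≠ 0 → expLt δ θ := fun δ hδ =>
    hmem (Finsupp.mem_support_iff.2 hδ)
  refine ⟨?_, fun δ hδ => ?_⟩
  · rw [hrepr, Finsupp.add_apply, Finsupp.single_eq_same,
      by_contra fun h => expLt_irrefl θ (hlow θ h), zero_add]
    exact hc
  · by_cases hδθ : δ = θ
    · exact Or.inl hδθ
    · rw [hrepr, Finsupp.add_apply, Finsupp.single_eq_of_ne hδθ, add_zero] at hδ
      exact Or.inr (hlow δ hδ)

end HasLeadTerm

theorem IsLeadExp.unique {b : Module.Basis (Fin n × Fin n → ℕ) K (QuantumMatrix K q n)}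
    {f : QuantumMatrix K q n} {θ θ' : Fin n × Fin n → ℕ}
    (h : IsLeadExp b f θ) (h' : IsLeadExp b f θ') : θ = θ' := by
  rcases h'.2 θ h.1 with rfl | hlt
  · rfl
  rcases h.2 θ' h'.1 with rfl | hlt'
  · rfl
  exact absurd (expLt_trans hlt hlt') (expLt_irrefl θ)

end LeadingTerm

section Words

variable {n : ℕ}

abbrev Word (n : ℕ) := List (Fin n ×ₗ Fin n)

def wexp (w : Word n) : Fin n × Fin n → ℕ := fun p => w.count (toLex p)

theorem wexp_append (u v : Word n) : wexp (u ++ v) = wexp u + wexp v := by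
  funext p; simp [wexp, List.count_append]

theorem wexp_append_swap (u v : Word n) (a b : Fin n ×ₗ Fin n) :
    wexp (u ++ b :: a :: v) = wexp (u ++ a :: b :: v) := by
  funext p; exact (List.Perm.append_left u (List.Perm.swap a b v)).count_eq _

theorem expLt_wexp_append_cons_cons {u v : Word n} {a b c d : Fin n ×ₗ Fin n}
    (ha : a < b) (hc : c < b) (hd : d < b) :
    expLt (wexp (u ++ c :: d :: v)) (wexp (u ++ a :: b :: v)) := by
  refine ⟨ofLex b, ?_, fun r hr => ?_⟩
  · simp [wexp, List.count_append, ha.ne, hc.ne, hd.ne]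
  · rw [idxLt_iff_toLex_lt, toLex_ofLex] at hr
    simp [wexp, List.count_append, hr.ne, (ha.trans hr).ne, (hc.trans hr).ne, (hd.trans hr).ne]

theorem append_cons_lt_append_cons (u : Word n) {a c : Fin n ×ₗ Fin n} (h : a < c) (x y : Word n) :
    u ++ a :: x < u ++ c :: y :=
  (List.lt_iff_lex_lt _ _).2 <| List.Lex.append_left _ (List.Lex.rel h) u

theorem exists_append_cons_cons_lt {w : Word n} (h : ¬ w.SortedGE) :
    ∃ u a b v, w = u ++ a :: b :: v ∧ a < b := by
  simp only [List.sortedGE_iff_isChain, List.isChain_iff_forall_rel_of_append_cons_cons,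
    not_forall, not_le] at h
  obtain ⟨a, b, u, v, hw, hab⟩ := h
  exact ⟨u, a, b, v, hw, hab⟩

def descIdx (n : ℕ) : Word n :=
  (List.finRange n).reverse.flatMap fun i => (List.finRange n).reverse.map fun j => toLex (i, j)

theorem mem_descIdx (p : Fin n ×ₗ Fin n) : p ∈ descIdx n := by
  simpa [descIdx] using ⟨(ofLex p).1, (ofLex p).2, rfl⟩

theorem descIdx_sortedGT : (descIdx n).SortedGT := by
  rw [List.sortedGT_iff_pairwise, descIdx, List.pairwise_flatMap, List.pairwise_reverse]
  refine ⟨fun i _ => ?_, (List.pairwise_lt_finRange n).imp fun hij x hx y hy => ?_⟩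
  · rw [List.pairwise_map, List.pairwise_reverse]
    exact (List.pairwise_lt_finRange n).imp fun {j k} (h : j < k) =>
      (Prod.Lex.toLex_lt_toLex (x := (i, j)) (y := (i, k))).2 (Or.inr ⟨rfl, h⟩)
  · simp only [List.mem_map, List.mem_reverse, List.mem_finRange, true_and] at hx hy
    obtain ⟨j, rfl⟩ := hx
    obtain ⟨k, rfl⟩ := hy
    exact Prod.Lex.toLex_lt_toLex.2 (Or.inl hij)

def canonWord (α : Fin n × Fin n → ℕ) : Word n :=
  (descIdx n).flatMap fun p => List.replicate (α (ofLex p)) p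

theorem wexp_canonWord (α : Fin n × Fin n → ℕ) : wexp (canonWord α) = α := by
  funext p
  classical
  rw [wexp, canonWord, List.count_flatMap, ← List.sum_toFinset _ descIdx_sortedGT.nodup]
  simp [List.count_replicate, Finset.sum_ite_eq', mem_descIdx]

theorem canonWord_sortedGE (α : Fin n × Fin n → ℕ) : (canonWord α).SortedGE := by
  rw [List.sortedGE_iff_pairwise, canonWord, List.pairwise_flatMap]
  refine ⟨fun p _ => List.pairwise_replicate.2 (Or.inr le_rfl), ?_⟩
  refine (List.sortedGT_iff_pairwise.1 descIdx_sortedGT).imp fun hpr x hx y hy => ?_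
  rw [List.eq_of_mem_replicate hx, List.eq_of_mem_replicate hy]
  exact hpr.le

theorem eq_canonWord_of_sortedGE {w : Word n} (h : w.SortedGE) : w = canonWord (wexp w) :=
  List.Perm.eq_of_sortedGE h (canonWord_sortedGE _) <| List.perm_iff_count.2 fun p => by
    rw [show p = toLex (ofLex p) from rfl, ← wexp, ← wexp, wexp_canonWord]

end Words

section Straightening

variable {K : Type*} [Field K] {q : K} {n : ℕ}

variable (K q) in
noncomputable def zgen (p : Fin n ×ₗ Fin n) : QuantumMatrix K q n :=
  Zgen K q n (ofLex p).1 (ofLex p).2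

variable (K q) in
noncomputable def wprod (w : Word n) : QuantumMatrix K q n :=
  (w.map (zgen K q)).prod

theorem wprod_append (u v : Word n) : wprod K q (u ++ v) = wprod K q u * wprod K q v := by
  simp [wprod]

theorem wprod_append_cons_cons (u v : Word n) (a b : Fin n ×ₗ Fin n) :
    wprod K q (u ++ a :: b :: v) = wprod K q u * (zgen K q a * zgen K q b) * wprod K q v := by
  simp [wprod, mul_assoc]

theorem wprod_canonWord (α : Fin n × Fin n → ℕ) : wprod K q (canonWord α) = zmon K q α := by
  simp [wprod, canonWord, descIdx, zmon, zgen, List.flatMap_def, List.prod_flatten,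
    Function.comp_def]

theorem zgen_mul_zgen_of_lt (hq : q ≠ 0) {a b : Fin n ×ₗ Fin n} (hab : a < b) :
    (∃ s : K, s ≠ 0 ∧ zgen K q a * zgen K q b = s • (zgen K q b * zgen K q a)) ∨
    ((ofLex a).1 < (ofLex b).1 ∧ (ofLex a).2 < (ofLex b).2 ∧
      zgen K q a * zgen K q b = zgen K q b * zgen K q a +
        (q - q⁻¹) • (zgen K q (toLex ((ofLex a).1, (ofLex b).2)) *
          zgen K q (toLex ((ofLex b).1, (ofLex a).2)))) := by
  obtain ⟨⟨i, j⟩, rfl⟩ : ∃ p, toLex p = a := ⟨ofLex a, rfl⟩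
  obtain ⟨⟨s, t⟩, rfl⟩ : ∃ p, toLex p = b := ⟨ofLex b, rfl⟩
  have rel {x y} (h : QMRel K q n x y) := RingQuot.mkAlgHom_rel K h
  simp only [ofLex_toLex]
  rcases Prod.Lex.toLex_lt_toLex.1 hab with hi | ⟨rfl, hj⟩
  · rcases lt_trichotomy j t with hj | rfl | hj
    · have h := rel (.r4 i j s t hi hj)
      simp only [map_mul, map_add, map_smul] at h
      exact .inr ⟨hi, hj, h⟩
    · have h := rel (.r2 i j s hi)
      simp only [map_mul, map_smul] at h
      exact .inl ⟨q, hq, h⟩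
    · have h := rel (.r3 i j s t hi hj)
      simp only [map_mul] at h
      exact .inl ⟨1, one_ne_zero, by rw [one_smul]; exact h⟩
  · have h := rel (.r1 i j t hj)
    simp only [map_mul, map_smul] at h
    exact .inl ⟨q, hq, h⟩

theorem hasLeadTerm_wprod (hq : q ≠ 0) (w : Word n) : HasLeadTerm K q (wexp w) (wprod K q w) := by
  have hwf : {v : Word n | v.length = w.length}.WellFoundedOn (· > ·) :=
    (List.finite_length_eq _ _).wellFoundedOn
  refine hwf.induction (P := fun w => HasLeadTerm K q (wexp w) (wprod K q w)) rfl
    fun w hlen ih => ?_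
  by_cases hsorted : w.SortedGE
  · rw [eq_canonWord_of_sortedGE hsorted, wexp_canonWord, wprod_canonWord]
    exact hasLeadTerm_zmon _
  obtain ⟨u, a, b, v, rfl, hab⟩ := exists_append_cons_cons_lt hsorted
  have hswap : HasLeadTerm K q (wexp (u ++ a :: b :: v)) (wprod K q (u ++ b :: a :: v)) := by
    rw [← wexp_append_swap]
    exact ih _ (by simpa using hlen) (append_cons_lt_append_cons u hab _ _)
  rw [wprod_append_cons_cons]
  rcases zgen_mul_zgen_of_lt hq hab with ⟨s, hs, hrel⟩ | ⟨hi, hj, hrel⟩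
  · rw [hrel, mul_smul_comm, smul_mul_assoc, ← wprod_append_cons_cons]
    exact hswap.smul hs
  · set c : Fin n ×ₗ Fin n := toLex ((ofLex a).1, (ofLex b).2)
    set d : Fin n ×ₗ Fin n := toLex ((ofLex b).1, (ofLex a).2)
    have hac : a < c := Prod.Lex.toLex_lt_toLex.2 (.inr ⟨rfl, hj⟩)
    have hcb : c < b := Prod.Lex.toLex_lt_toLex.2 (.inl hi)
    have hdb : d < b := Prod.Lex.toLex_lt_toLex.2 (.inr ⟨rfl, hj⟩)
    have hlow : HasLeadTerm K q (wexp (u ++ c :: d :: v)) (wprod K q (u ++ c :: d :: v)) :=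
      ih _ (by simpa using hlen) (append_cons_lt_append_cons u hac _ _)
    rw [hrel, mul_add, add_mul, mul_smul_comm, smul_mul_assoc, ← wprod_append_cons_cons,
      ← wprod_append_cons_cons]
    exact hswap.add_mem <| Submodule.smul_mem _ _ <|
      hlow.mem_lowSpan (expLt_wexp_append_cons_cons hab hcb hdb)

theorem hasLeadTerm_zmon_mul_zmon_mul_zmon (hq : q ≠ 0) (γ α η : Fin n × Fin n → ℕ) :
    HasLeadTerm K q (γ + α + η) (zmon K q γ * zmon K q α * zmon K q η) := by
  simpa only [wexp_append, wexp_canonWord, wprod_append, wprod_canonWord] using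
    hasLeadTerm_wprod hq (canonWord γ ++ canonWord α ++ canonWord η)

end Straightening

theorem expLt_monomial_ordering_cond3_general (K : Type*) [Field K]
    (q : K) (hq : q ≠ 0) (n : ℕ)
    (b : Module.Basis (Fin n × Fin n → ℕ) K (QuantumMatrix K q n))
    (hb : ∀ α, b α = zmon K q α)
    (α β γ η : Fin n × Fin n → ℕ) (h : expLt α β) :
    ∀ γ₁ γ₂, IsLeadExp b (zmon K q γ * zmon K q α * zmon K q η) γ₁ →
      IsLeadExp b (zmon K q γ * zmon K q β * zmon K q η) γ₂ → expLt γ₁ γ₂ := by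
  intro γ₁ γ₂ h₁ h₂
  rw [h₁.unique ((hasLeadTerm_zmon_mul_zmon_mul_zmon hq γ α η).isLeadExp b hb),
    h₂.unique ((hasLeadTerm_zmon_mul_zmon_mul_zmon hq γ β η).isLeadExp b hb)]
  exact expLt_add_add γ η h

/-- the lexicographic order satisfies condition (3) of the
definition of a monomial ordering: if `α ≺ β` then
`LE(z^γ z^α z^η) ≺ LE(z^γ z^β z^η)`. -/
theorem expLt_monomial_ordering_cond3 (K : Type*) [Field K] [CharZero K]
    (q : K) (hq : q ≠ 0) (n : ℕ) (hn : 2 ≤ n)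
    (b : Module.Basis (Fin n × Fin n → ℕ) K (QuantumMatrix K q n))
    (hb : ∀ α, b α = zmon K q α)
    (α β γ η : Fin n × Fin n → ℕ) (h : expLt α β) :
    ∀ γ₁ γ₂, IsLeadExp b (zmon K q γ * zmon K q α * zmon K q η) γ₁ →
      IsLeadExp b (zmon K q γ * zmon K q β * zmon K q η) γ₂ → expLt γ₁ γ₂ :=
  expLt_monomial_ordering_cond3_general K q hq n b hb α β γ η h
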